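/- (Theorem 1: partition of work.) Let β > 0, let H : ℝ → Matrix n n ℂ be a continuously differentiable family of Hermitian matrices, and let ρ : ℝ → Matrix n n ℂ be a continuously differentiable family of positive definite density matrices. For t ∈ ℝ, set Z_t = Re tr(exp(−β·H_t)), ρ^β_t = exp(−β·H_t)/Z_t, F^β_t = −(1/β)·Real.log Z_t, and I(t) = S(ρ_t‖ρ^β_t). For τ ≥ 0 define the work ΔW = ∫₀^τ Re tr(ρ_t · H'_t) dt, the heat ΔQ = ∫₀^τ Re tr(ρ'_t · H_t) dt, the entropy change ΔS = S(ρ_τ) − S(ρ_0), the entropy production Δ_iS = ΔS − β·ΔQ, ΔI = I(τ) − I(0), and ΔF^β = F^β_τ − F^β_0. Then ΔW = (1/β)·Δ_iS + (1/β)·ΔI + ΔF^β; that is, the work partitions as ΔW = ΔW_irr + ΔW_rev with irreversible work ΔW_irr = (1/β)·Δ_iS and reversible work ΔW_rev = (1/β)·ΔI + ΔF^β. -/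

import Mathlib

open scoped ComplexOrder

attribute [local instance] Matrix.normedAddCommGroup Matrix.normedSpace

/-- The matrix exponential of an `n × n` complex matrix. -/
noncomputable def matExp {n : ℕ} (A : Matrix (Fin n) (Fin n) ℂ) : Matrix (Fin n) (Fin n) ℂ :=
  NormedSpace.exp A

/-- The matrix logarithm, given by the continuous functional calculus (the real
logarithm applied to the eigenvalues of a Hermitian matrix). -/
noncomputable def matLog {n : ℕ} (A : Matrix (Fin n) (Fin n) ℂ) : Matrix (Fin n) (Fin n) ℂ :=
  cfc Real.log A

/-- The von Neumann entropy `S(ρ) = −Re tr(ρ log ρ)`. -/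
noncomputable def vnEntropy {n : ℕ} (ρ : Matrix (Fin n) (Fin n) ℂ) : ℝ :=
  -(Matrix.trace (ρ * matLog ρ)).re

/-- The relative entropy `S(ρ‖σ) = Re tr(ρ log ρ) − Re tr(ρ log σ)`. -/
noncomputable def relEntropy {n : ℕ} (ρ σ : Matrix (Fin n) (Fin n) ℂ) : ℝ :=
  (Matrix.trace (ρ * matLog ρ)).re - (Matrix.trace (ρ * matLog σ)).re

/-- The partition function `Z = Re tr(exp(−βH))`. -/
noncomputable def partZ {n : ℕ} (β : ℝ) (H : Matrix (Fin n) (Fin n) ℂ) : ℝ :=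
  (Matrix.trace (matExp ((-β) • H))).re

/-- The Gibbs state `ρ^β = exp(−βH)/Z`. -/
noncomputable def gibbs {n : ℕ} (β : ℝ) (H : Matrix (Fin n) (Fin n) ℂ) :
    Matrix (Fin n) (Fin n) ℂ :=
  (partZ β H)⁻¹ • matExp ((-β) • H)

/-! Since `log ρ^β = −β H − (log Z) 1` and `tr ρ = 1`, the relative entropy to the Gibbs
state is `S(ρ‖ρ^β) = −S(ρ) + β Re tr(ρ H) + log Z`, so that
`(1/β) ΔI + ΔF^β = Δ Re tr(ρ H) − (1/β) ΔS`. By the product rule `Δ Re tr(ρ H) = ΔW + ΔQ`,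
and `(1/β) ΔiS = (1/β) ΔS − ΔQ` cancels the remaining terms. -/

section LogExp

variable {A : Type*} [NormedRing A] [StarRing A] [NormedAlgebra ℝ A]
  [ContinuousFunctionalCalculus ℝ A IsSelfAdjoint]

lemma CFC.log_smul_exp {a : A} (ha : IsSelfAdjoint a) {r : ℝ} (hr : r ≠ 0) :
    CFC.log (r • NormedSpace.exp a) = algebraMap ℝ A (Real.log r) + a := by
  have hexp : NormedSpace.exp a = cfc Real.exp a := (CFC.real_exp_eq_normedSpace_exp ha).symm
  have hspec : ∀ x ∈ spectrum ℝ (NormedSpace.exp a), x ≠ 0 := by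
    rw [hexp, cfc_map_spectrum Real.exp a]
    rintro - ⟨x, -, rfl⟩
    exact (Real.exp_pos x).ne'
  rw [CFC.log_smul _ hspec hr (hexp ▸ cfc_predicate _ _), CFC.log_exp a ha]

end LogExp

section HermitianTrace

open scoped Matrix.Norms.L2Operator

variable {ι 𝕜 : Type*} [Fintype ι] [DecidableEq ι] [RCLike 𝕜]

lemma Matrix.IsHermitian.trace_cfc {A : Matrix ι ι 𝕜} (hA : A.IsHermitian) (f : ℝ → ℝ) :
    (cfc f A).trace = ∑ i, (f (hA.eigenvalues i) : 𝕜) := by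
  rw [hA.cfc_eq, Matrix.IsHermitian.cfc, Unitary.conjStarAlgAut_apply, Matrix.trace_mul_cycle,
    Unitary.star_mul_self_of_mem (SetLike.coe_mem _), one_mul, Matrix.trace_diagonal]
  rfl

lemma Matrix.IsHermitian.re_trace_exp_pos [Nonempty ι] {A : Matrix ι ι ℂ}
    (hA : A.IsHermitian) : 0 < (NormedSpace.exp A).trace.re := by
  rw [← CFC.real_exp_eq_normedSpace_exp hA.isSelfAdjoint, hA.trace_cfc, Complex.re_sum]
  exact Finset.sum_pos (fun i _ => Real.exp_pos _) Finset.univ_nonempty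

end HermitianTrace

section Gibbs

open scoped Matrix.Norms.L2Operator

variable {n : ℕ}

lemma partZ_pos (hn : 0 < n) (β : ℝ) {H : Matrix (Fin n) (Fin n) ℂ} (hH : H.IsHermitian) :
    0 < partZ β H :=
  haveI : Nonempty (Fin n) := ⟨⟨0, hn⟩⟩
  (hH.smul (IsSelfAdjoint.all (-β))).re_trace_exp_pos

lemma matLog_gibbs (hn : 0 < n) (β : ℝ) {H : Matrix (Fin n) (Fin n) ℂ} (hH : H.IsHermitian) :
    matLog (gibbs β H) = (-Real.log (partZ β H)) • 1 + (-β) • H := by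
  rw [matLog, gibbs, matExp, ← CFC.log,
    CFC.log_smul_exp (hH.smul (IsSelfAdjoint.all (-β))).isSelfAdjoint
      (inv_pos.mpr (partZ_pos hn β hH)).ne',
    Real.log_inv, Algebra.algebraMap_eq_smul_one]

lemma relEntropy_gibbs (hn : 0 < n) (β : ℝ) {ρ H : Matrix (Fin n) (Fin n) ℂ}
    (hH : H.IsHermitian) (hρ : ρ.trace = 1) :
    relEntropy ρ (gibbs β H) = -vnEntropy ρ + β * (ρ * H).trace.re + Real.log (partZ β H) := by
  rw [relEntropy, vnEntropy, matLog_gibbs hn β hH, mul_add, mul_smul_comm, mul_smul_comm,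
    mul_one, Matrix.trace_add, Matrix.trace_smul, Matrix.trace_smul, hρ]
  simp only [Complex.add_re, Complex.real_smul, Complex.re_ofReal_mul, mul_one, Complex.ofReal_re]
  ring

end Gibbs

section IntegrationByParts

variable {E F G : Type*} [NormedAddCommGroup E] [NormedSpace ℝ E] [NormedAddCommGroup F]
  [NormedSpace ℝ F] [NormedAddCommGroup G] [NormedSpace ℝ G] [CompleteSpace G]

lemma integral_bilinear_deriv_add_eq_sub (B : E →L[ℝ] F →L[ℝ] G) {u : ℝ → E} {v : ℝ → F}
    (hu : ContDiff ℝ 1 u) (hv : ContDiff ℝ 1 v) (a b : ℝ) :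
    (∫ t in a..b, B (u t) (deriv v t)) + ∫ t in a..b, B (deriv u t) (v t) =
      B (u b) (v b) - B (u a) (v a) := by
  have hu' : Continuous (deriv u) := hu.continuous_deriv le_rfl
  have hv' : Continuous (deriv v) := hv.continuous_deriv le_rfl
  have hcont_left : Continuous fun t => B (u t) (deriv v t) := by
    have := hu.continuous; fun_prop
  have hcont_right : Continuous fun t => B (deriv u t) (v t) := by
    have := hv.continuous; fun_prop
  rw [← intervalIntegral.integral_add (hcont_left.intervalIntegrable _ _)
    (hcont_right.intervalIntegrable _ _)]
  refine intervalIntegral.integral_eq_sub_of_hasDerivAt (f := fun t => B (u t) (v t))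
    (fun t _ => ?_) ((hcont_left.fun_add hcont_right).intervalIntegrable _ _)
  exact B.hasDerivAt_of_bilinear (fun _ => (hu.differentiable one_ne_zero t).hasDerivAt)
    (fun _ => (hv.differentiable one_ne_zero t).hasDerivAt)

end IntegrationByParts

lemma integral_re_trace_mul_deriv_add {ι : Type*} [Fintype ι] {u v : ℝ → Matrix ι ι ℂ}
    (hu : ContDiff ℝ 1 u) (hv : ContDiff ℝ 1 v) (a b : ℝ) :
    (∫ t in a..b, (u t * deriv v t).trace.re) + ∫ t in a..b, (deriv u t * v t).trace.re =
      (u b * v b).trace.re - (u a * v a).trace.re :=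
  integral_bilinear_deriv_add_eq_sub
    ((LinearMap.mul ℝ _).compr₂
      (Complex.reLm ∘ₗ Matrix.traceLinearMap ι ℝ ℂ)).toContinuousBilinearMap
    hu hv a b

theorem work_partition_reversible_irreversible_general {n : ℕ} (hn : 0 < n)
    (β : ℝ) (hβ : 0 < β) (H ρ : ℝ → Matrix (Fin n) (Fin n) ℂ)
    (hH : ContDiff ℝ 1 H) (hHherm : ∀ t, (H t).IsHermitian)
    (hρ : ContDiff ℝ 1 ρ)
    (hρtr : ∀ t, Matrix.trace (ρ t) = 1)
    (τ : ℝ)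
    (ΔW ΔQ ΔiS ΔI ΔFβ : ℝ)
    (hW : ΔW = ∫ t in (0:ℝ)..τ, (Matrix.trace (ρ t * deriv H t)).re)
    (hQ : ΔQ = ∫ t in (0:ℝ)..τ, (Matrix.trace (deriv ρ t * H t)).re)
    (hiS : ΔiS = (vnEntropy (ρ τ) - vnEntropy (ρ 0)) - β * ΔQ)
    (hI : ΔI = relEntropy (ρ τ) (gibbs β (H τ)) - relEntropy (ρ 0) (gibbs β (H 0)))
    (hF : ΔFβ = (-(1 / β) * Real.log (partZ β (H τ))) - (-(1 / β) * Real.log (partZ β (H 0)))) :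
    ΔW = (1 / β) * ΔiS + (1 / β) * ΔI + ΔFβ := by
  have first_law : ΔW + ΔQ = (ρ τ * H τ).trace.re - (ρ 0 * H 0).trace.re := by
    rw [hW, hQ]
    exact integral_re_trace_mul_deriv_add hρ hH 0 τ
  rw [hiS, hI, hF, relEntropy_gibbs hn β (hHherm τ) (hρtr τ),
    relEntropy_gibbs hn β (hHherm 0) (hρtr 0)]
  field_simp
  linear_combination β * first_law

/-- **Theorem 1: partition of work into reversible and irreversible parts.**
For `β > 0`, a continuously differentiable family of Hermitian Hamiltonians `H`, and a
continuously differentiable family of positive definite density matrices `ρ`, with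
work `ΔW = ∫₀^τ Re tr(ρ_t H'_t) dt`, heat `ΔQ = ∫₀^τ Re tr(ρ'_t H_t) dt`, entropy
production `ΔiS = (S(ρ_τ) − S(ρ_0)) − β·ΔQ`, `ΔI = S(ρ_τ‖ρ^β_τ) − S(ρ_0‖ρ^β_0)` and
`ΔF^β = F^β_τ − F^β_0`, the work partitions as
`ΔW = (1/β)·ΔiS + (1/β)·ΔI + ΔF^β = ΔW_irr + ΔW_rev`. -/
theorem work_partition_reversible_irreversible {n : ℕ} (hn : 0 < n)
    (β : ℝ) (hβ : 0 < β) (H ρ : ℝ → Matrix (Fin n) (Fin n) ℂ)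
    (hH : ContDiff ℝ 1 H) (hHherm : ∀ t, (H t).IsHermitian)
    (hρ : ContDiff ℝ 1 ρ)
    (hρpos : ∀ t, (ρ t).PosDef) (hρtr : ∀ t, Matrix.trace (ρ t) = 1)
    (τ : ℝ) (hτ : 0 ≤ τ)
    (ΔW ΔQ ΔiS ΔI ΔFβ : ℝ)
    (hW : ΔW = ∫ t in (0:ℝ)..τ, (Matrix.trace (ρ t * deriv H t)).re)
    (hQ : ΔQ = ∫ t in (0:ℝ)..τ, (Matrix.trace (deriv ρ t * H t)).re)
    (hiS : ΔiS = (vnEntropy (ρ τ) - vnEntropy (ρ 0)) - β * ΔQ)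
    (hI : ΔI = relEntropy (ρ τ) (gibbs β (H τ)) - relEntropy (ρ 0) (gibbs β (H 0)))
    (hF : ΔFβ = (-(1 / β) * Real.log (partZ β (H τ))) - (-(1 / β) * Real.log (partZ β (H 0)))) :
    ΔW = (1 / β) * ΔiS + (1 / β) * ΔI + ΔFβ :=
  work_partition_reversible_irreversible_general hn β hβ H ρ hH hHherm hρ hρtr τ ΔW ΔQ ΔiS ΔI ΔFβ hW
    hQ hiS hI hF
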